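/- Let Ω ⊂ ℝⁿ be a domain and p : cl(Ω) → ℝ a continuous function with inf_Ω p > 1. Define the modular ρ_p(h) = ∫_Ω |h(x)|^{p(x)} / p(x) dx for measurable h : Ω → ℝⁿ, where |·| is the Euclidean norm on ℝⁿ. Then ρ_p is uniformly convex: for every ε > 0 there exists δ with 0 < δ < 1 such that for every pair of measurable functions f, g : Ω → ℝⁿ with ρ_p(f) < ∞ and ρ_p(g) < ∞, if ρ_p((f − g)/2) > ε · (ρ_p(f) + ρ_p(g))/2, then ρ_p((f + g)/2) < (1 − δ) · (ρ_p(f) + ρ_p(g))/2. -/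

import Mathlib

/-!
Pointwise, `v ↦ ‖v‖ ^ p` on a real inner product space is uniformly convex, uniformly in
`p ≥ q > 1`. For `p ≥ 2` this is Clarkson's inequality. For `q ≤ p ≤ 2` only the norms of `a`, `b`,
`(a + b) / 2` and `(a - b) / 2` matter, and they are tied together by the parallelogram law: when
`‖b‖` is well below `‖a‖`, strict convexity of `t ↦ t ^ p` gives a gap that is uniform by
compactness in `(p, ‖b‖ / ‖a‖)`; when `‖b‖ ≈ ‖a‖`, a large difference forces a short midpoint.

With `M` the mean of `‖a‖ ^ p` and `‖b‖ ^ p`, the dichotomy "`‖(a - b) / 2‖ ^ p ≤ η M` or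
`‖(a + b) / 2‖ ^ p ≤ (1 - δ) M`" implies `‖(a + b) / 2‖ ^ p + δ ‖(a - b) / 2‖ ^ p ≤ (1 + δ η) M`,
an inequality without case distinction that can be integrated. Once the modular of `(f - g) / 2`
exceeds `2 η` times the mean modular `ρ̄` of `f` and `g`, it gives `ρ((f + g) / 2) < (1 - δ η) ρ̄`.
-/

open MeasureTheory ENNReal Filter

/-- The modular `ρ_p(h) = ∫_Ω |h(x)|^{p(x)} / p(x) dx ∈ [0,∞]` for a vector-valued
measurable function `h : Ω → ℝⁿ`, with `|·|` the Euclidean norm. -/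
noncomputable def dirichletModular {n : ℕ} (Ω : Set (EuclideanSpace ℝ (Fin n)))
    (p : EuclideanSpace ℝ (Fin n) → ℝ)
    (h : EuclideanSpace ℝ (Fin n) → EuclideanSpace ℝ (Fin n)) : ℝ≥0∞ :=
  ∫⁻ x in Ω, ENNReal.ofReal (‖h x‖ ^ (p x) / p x)

open Set

namespace Real

lemma midpoint_rpow_le {s t p : ℝ} (hs : 0 ≤ s) (ht : 0 ≤ t) (hp : 1 ≤ p) :
    ((s + t) / 2) ^ p ≤ (s ^ p + t ^ p) / 2 := by
  have h := (convexOn_rpow hp).2 (mem_Ici.2 hs) (mem_Ici.2 ht) (by norm_num : (0 : ℝ) ≤ 1 / 2)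
    (by norm_num : (0 : ℝ) ≤ 1 / 2) (by norm_num)
  simp only [smul_eq_mul] at h
  rw [show (s + t) / 2 = 1 / 2 * s + 1 / 2 * t by ring]
  linarith

lemma exists_pos_midpoint_rpow_add_le {q r : ℝ} (hq : 1 < q) (hr : r < 1) :
    ∃ γ, 0 < γ ∧ ∀ p ∈ Icc q 2, ∀ t ∈ Icc 0 r, ((1 + t) / 2) ^ p + γ ≤ (1 + t ^ p) / 2 := by
  set F : ℝ × ℝ → ℝ := fun z => (1 + z.2 ^ z.1) / 2 - ((1 + z.2) / 2) ^ z.1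
  have hcont : ContinuousOn F (Icc q 2 ×ˢ Icc 0 r) := by
    have hexp : ∀ z ∈ Icc q 2 ×ˢ Icc (0 : ℝ) r, 0 < z.1 := fun z hz => by linarith [hz.1.1]
    refine ((continuousOn_const.add (continuousOn_snd.rpow continuousOn_fst
      fun z hz => Or.inr (hexp z hz))).div_const 2).sub
      (((continuousOn_const.add continuousOn_snd).div_const 2).rpow continuousOn_fst
      fun z hz => Or.inr (hexp z hz))
  have hpos : ∀ z ∈ Icc q 2 ×ˢ Icc (0 : ℝ) r, 0 < F z := by
    rintro ⟨p, t⟩ ⟨⟨hqp, -⟩, ht0, htr⟩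
    have h := (strictConvexOn_rpow (hq.trans_le hqp)).2 (mem_Ici.2 zero_le_one) (mem_Ici.2 ht0)
      (by linarith : (1 : ℝ) ≠ t) (by norm_num : (0 : ℝ) < 1 / 2) (by norm_num : (0 : ℝ) < 1 / 2)
      (by norm_num)
    simp only [smul_eq_mul, one_rpow] at h
    rw [show 1 / 2 * 1 + 1 / 2 * t = (1 + t) / 2 by ring] at h
    simp only [F, sub_pos]
    linarith
  obtain ⟨γ, hγ, hγF⟩ := (isCompact_Icc.prod isCompact_Icc).exists_forall_le' hcont hpos
  refine ⟨γ, hγ, fun p hp t ht => ?_⟩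
  have h := hγF (p, t) ⟨hp, ht⟩
  simp only [F] at h
  linarith

lemma exists_scalar_uniform_convexity_one {q η : ℝ} (hq : 1 < q) (hη : 0 < η) (hη1 : η < 1) :
    ∃ δ, 0 < δ ∧ δ ≤ 1 ∧ ∀ p ∈ Icc q 2, ∀ t ∈ Icc (0 : ℝ) 1, ∀ d m : ℝ, 0 ≤ d → 0 ≤ m →
      m ≤ (1 + t) / 2 → m ^ 2 + d ^ 2 ≤ (1 + t ^ 2) / 2 → η * ((1 + t ^ p) / 2) < d ^ p →
      m ^ p ≤ (1 - δ) * ((1 + t ^ p) / 2) := by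
  set θ := (η / 2) ^ q⁻¹
  have hθ0 : 0 < θ := rpow_pos_of_pos (by linarith) _
  have hθ1 : θ ≤ 1 := rpow_le_one (by linarith) (by linarith) (by positivity)
  have hθq : θ ^ q = η / 2 := rpow_inv_rpow (by linarith) (by linarith)
  set l := θ ^ 2 / 8
  have hl0 : 0 < l := by positivity
  have hl1 : l ≤ 1 / 8 := by simp only [l]; nlinarith
  obtain ⟨γ, hγ, hgap⟩ := exists_pos_midpoint_rpow_add_le (r := 1 - l) hq (by linarith)
  refine ⟨min γ l, by positivity, (min_le_right _ _).trans (by linarith), ?_⟩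
  rintro p ⟨hqp, hp2⟩ t ⟨ht0, ht1⟩ d m hd hm hmt hpar hdp
  have hp : 1 < p := hq.trans_le hqp
  have htp0 : 0 ≤ t ^ p := rpow_nonneg ht0 p
  have htp1 : t ^ p ≤ 1 := rpow_le_one ht0 ht1 (by linarith)
  have hδM : min γ l * ((1 + t ^ p) / 2) ≤ min γ l := by nlinarith [lt_min hγ hl0]
  rcases le_or_gt t (1 - l) with ht | ht
  · have hmid := hgap p ⟨hqp, hp2⟩ t ⟨ht0, ht⟩
    calc m ^ p ≤ ((1 + t) / 2) ^ p := rpow_le_rpow hm hmt (by linarith)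
      _ ≤ (1 + t ^ p) / 2 - γ := by linarith
      _ ≤ (1 - min γ l) * ((1 + t ^ p) / 2) := by linarith [min_le_left γ l]
  · -- near the diagonal the difference `d` exceeds `θ`, which shortens the midpoint
    have hθd : θ < d := by
      refine (rpow_lt_rpow_iff (z := p) hθ0.le hd (by linarith)).1 ?_
      calc θ ^ p ≤ θ ^ q := rpow_le_rpow_of_exponent_ge hθ0 hθ1 hqp
        _ = η / 2 := hθq
        _ ≤ η * ((1 + t ^ p) / 2) := by nlinarith
        _ < d ^ p := hdp
    have hm1 : m ≤ 1 - 4 * l := by simp only [l]; nlinarith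
    have hmp : m ^ p ≤ m := by
      simpa using rpow_le_rpow_of_exponent_ge' hm (by linarith) zero_le_one hp.le
    have ht2 : t ^ 2 ≤ t ^ p := by
      simpa using rpow_le_rpow_of_exponent_ge' ht0 ht1 (by linarith) hp2
    have hM : 1 - l ≤ (1 + t ^ p) / 2 := by nlinarith
    nlinarith [min_le_right γ l]

lemma exists_scalar_uniform_convexity {q η : ℝ} (hq : 1 < q) (hη : 0 < η) (hη1 : η < 1) :
    ∃ δ, 0 < δ ∧ δ ≤ 1 ∧ ∀ p ∈ Icc q 2, ∀ s t d m : ℝ, 0 ≤ t → t ≤ s → 0 ≤ d → 0 ≤ m →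
      m ≤ (s + t) / 2 → m ^ 2 + d ^ 2 ≤ (s ^ 2 + t ^ 2) / 2 →
      η * ((s ^ p + t ^ p) / 2) < d ^ p → m ^ p ≤ (1 - δ) * ((s ^ p + t ^ p) / 2) := by
  obtain ⟨δ, hδ0, hδ1, hδ⟩ := exists_scalar_uniform_convexity_one hq hη hη1
  refine ⟨δ, hδ0, hδ1, ?_⟩
  rintro p hp s t d m ht hts hd hm hmst hpar hdp
  have hp0 : 0 < p := by linarith [hp.1]
  rcases (ht.trans hts).eq_or_lt with rfl | hs
  · have hd0 : d = 0 := by nlinarith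
    have ht0 : t = 0 := by linarith
    subst hd0 ht0
    simp [zero_rpow hp0.ne'] at hdp
  have hsp : 0 < s ^ p := rpow_pos_of_pos hs p
  have hunit := hδ p hp (t / s) ⟨div_nonneg ht hs.le, (div_le_one hs).2 hts⟩ (d / s) (m / s)
    (div_nonneg hd hs.le) (div_nonneg hm hs.le)
    (by rw [div_le_iff₀ hs]; field_simp; linarith)
    (by rw [div_pow, div_pow, div_pow]; field_simp; linarith)
    (by rw [div_rpow ht hs.le, div_rpow hd hs.le, lt_div_iff₀ hsp]; field_simp; linarith)
  rw [div_rpow ht hs.le, div_rpow hm hs.le, div_le_iff₀ hsp] at hunit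
  calc m ^ p ≤ (1 - δ) * ((1 + t ^ p / s ^ p) / 2) * s ^ p := hunit
    _ = (1 - δ) * ((s ^ p + t ^ p) / 2) := by field_simp

end Real

section InnerProductSpace

variable {V : Type*} [NormedAddCommGroup V] [InnerProductSpace ℝ V]

lemma norm_half_smul (v : V) : ‖(2⁻¹ : ℝ) • v‖ = ‖v‖ / 2 := by
  rw [norm_smul, norm_inv, Real.norm_ofNat, inv_mul_eq_div]

lemma norm_half_smul_add_le (a b : V) : ‖(2⁻¹ : ℝ) • (a + b)‖ ≤ (‖a‖ + ‖b‖) / 2 := by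
  rw [norm_half_smul]
  linarith [norm_add_le a b]

lemma norm_half_smul_sub_le (a b : V) : ‖(2⁻¹ : ℝ) • (a - b)‖ ≤ (‖a‖ + ‖b‖) / 2 := by
  rw [norm_half_smul]
  linarith [norm_sub_le a b]

lemma norm_half_smul_add_sq_add_norm_half_smul_sub_sq (a b : V) :
    ‖(2⁻¹ : ℝ) • (a + b)‖ ^ 2 + ‖(2⁻¹ : ℝ) • (a - b)‖ ^ 2 = (‖a‖ ^ 2 + ‖b‖ ^ 2) / 2 := by
  rw [norm_half_smul, norm_half_smul]
  linarith [parallelogram_law_with_norm ℝ a b]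

lemma rpow_norm_half_smul_add_le {p : ℝ} (hp : 1 ≤ p) (a b : V) :
    ‖(2⁻¹ : ℝ) • (a + b)‖ ^ p ≤ (‖a‖ ^ p + ‖b‖ ^ p) / 2 :=
  (Real.rpow_le_rpow (norm_nonneg _) (norm_half_smul_add_le a b) (by linarith)).trans
    (Real.midpoint_rpow_le (norm_nonneg a) (norm_nonneg b) hp)

lemma rpow_norm_half_smul_sub_le {p : ℝ} (hp : 1 ≤ p) (a b : V) :
    ‖(2⁻¹ : ℝ) • (a - b)‖ ^ p ≤ (‖a‖ ^ p + ‖b‖ ^ p) / 2 :=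
  (Real.rpow_le_rpow (norm_nonneg _) (norm_half_smul_sub_le a b) (by linarith)).trans
    (Real.midpoint_rpow_le (norm_nonneg a) (norm_nonneg b) hp)

lemma rpow_norm_half_smul_add_add_rpow_norm_half_smul_sub_le {p : ℝ} (hp : 2 ≤ p) (a b : V) :
    ‖(2⁻¹ : ℝ) • (a + b)‖ ^ p + ‖(2⁻¹ : ℝ) • (a - b)‖ ^ p ≤ (‖a‖ ^ p + ‖b‖ ^ p) / 2 := by
  have hsq : ∀ x : ℝ, 0 ≤ x → (x ^ 2) ^ (p / 2) = x ^ p := fun x hx => by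
    rw [← Real.rpow_natCast, ← Real.rpow_mul hx, Nat.cast_ofNat, mul_div_cancel₀ p two_ne_zero]
  have hp2 : 1 ≤ p / 2 := by linarith
  calc ‖(2⁻¹ : ℝ) • (a + b)‖ ^ p + ‖(2⁻¹ : ℝ) • (a - b)‖ ^ p
      = (‖(2⁻¹ : ℝ) • (a + b)‖ ^ 2) ^ (p / 2) + (‖(2⁻¹ : ℝ) • (a - b)‖ ^ 2) ^ (p / 2) := by
        rw [hsq _ (norm_nonneg _), hsq _ (norm_nonneg _)]
    _ ≤ (‖(2⁻¹ : ℝ) • (a + b)‖ ^ 2 + ‖(2⁻¹ : ℝ) • (a - b)‖ ^ 2) ^ (p / 2) :=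
        Real.add_rpow_le_rpow_add (by positivity) (by positivity) hp2
    _ = ((‖a‖ ^ 2 + ‖b‖ ^ 2) / 2) ^ (p / 2) := by
        rw [norm_half_smul_add_sq_add_norm_half_smul_sub_sq]
    _ ≤ ((‖a‖ ^ 2) ^ (p / 2) + (‖b‖ ^ 2) ^ (p / 2)) / 2 :=
        Real.midpoint_rpow_le (by positivity) (by positivity) hp2
    _ = (‖a‖ ^ p + ‖b‖ ^ p) / 2 := by rw [hsq _ (norm_nonneg _), hsq _ (norm_nonneg _)]

lemma exists_rpow_norm_half_smul_add_le_of_lt {q η : ℝ} (hq : 1 < q) (hη : 0 < η) (hη1 : η < 1) :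
    ∃ δ, 0 < δ ∧ δ ≤ 1 ∧ ∀ p, q ≤ p → ∀ a b : V,
      η * ((‖a‖ ^ p + ‖b‖ ^ p) / 2) < ‖(2⁻¹ : ℝ) • (a - b)‖ ^ p →
      ‖(2⁻¹ : ℝ) • (a + b)‖ ^ p ≤ (1 - δ) * ((‖a‖ ^ p + ‖b‖ ^ p) / 2) := by
  obtain ⟨δ, hδ0, hδ1, hδ⟩ := Real.exists_scalar_uniform_convexity (lt_min hq one_lt_two) hη hη1
  refine ⟨min δ η, lt_min hδ0 hη, (min_le_left _ _).trans hδ1, fun p hqp a b hab => ?_⟩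
  have hM : 0 ≤ (‖a‖ ^ p + ‖b‖ ^ p) / 2 := by positivity
  rcases le_or_gt 2 p with hp2 | hp2
  · nlinarith [rpow_norm_half_smul_add_add_rpow_norm_half_smul_sub_le hp2 a b, min_le_right δ η]
  wlog hba : ‖b‖ ≤ ‖a‖ generalizing a b
  · have hsub : ‖(2⁻¹ : ℝ) • (b - a)‖ = ‖(2⁻¹ : ℝ) • (a - b)‖ := by
      rw [norm_half_smul, norm_half_smul, norm_sub_rev]
    have h := this b a (by rwa [hsub, add_comm (‖b‖ ^ p)]) (by rwa [add_comm (‖b‖ ^ p)])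
      (le_of_not_ge hba)
    rwa [add_comm b a, add_comm (‖b‖ ^ p)] at h
  have h := hδ p ⟨(min_le_left _ _).trans hqp, hp2.le⟩ ‖a‖ ‖b‖ _ _ (norm_nonneg b) hba
    (norm_nonneg _) (norm_nonneg _) (norm_half_smul_add_le a b)
    (norm_half_smul_add_sq_add_norm_half_smul_sub_sq a b).le hab
  nlinarith [min_le_left δ η]

lemma rpow_norm_half_smul_add_add_mul_le {p δ η : ℝ} (hp : 1 ≤ p) (hδ : 0 ≤ δ) (hη : 0 ≤ η)
    {a b : V} (hgap : η * ((‖a‖ ^ p + ‖b‖ ^ p) / 2) < ‖(2⁻¹ : ℝ) • (a - b)‖ ^ p →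
      ‖(2⁻¹ : ℝ) • (a + b)‖ ^ p ≤ (1 - δ) * ((‖a‖ ^ p + ‖b‖ ^ p) / 2)) :
    ‖(2⁻¹ : ℝ) • (a + b)‖ ^ p + δ * ‖(2⁻¹ : ℝ) • (a - b)‖ ^ p ≤
      (1 + δ * η) * ((‖a‖ ^ p + ‖b‖ ^ p) / 2) := by
  have hadd := rpow_norm_half_smul_add_le hp a b
  have hsub := rpow_norm_half_smul_sub_le hp a b
  have hM : 0 ≤ (‖a‖ ^ p + ‖b‖ ^ p) / 2 := by positivity
  by_cases h : η * ((‖a‖ ^ p + ‖b‖ ^ p) / 2) < ‖(2⁻¹ : ℝ) • (a - b)‖ ^ p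
  · nlinarith [hgap h, mul_nonneg (mul_nonneg hδ hη) hM]
  · nlinarith [not_lt.1 h]

end InnerProductSpace

lemma ENNReal.ofReal_add_mul_le_ofReal_mul_half_add {x d a b δ c : ℝ} (hx : 0 ≤ x) (hd : 0 ≤ d)
    (ha : 0 ≤ a) (hb : 0 ≤ b) (hδ : 0 ≤ δ) (hc : 0 ≤ c) (h : x + δ * d ≤ c * ((a + b) / 2)) :
    ENNReal.ofReal x + ENNReal.ofReal δ * ENNReal.ofReal d ≤
      ENNReal.ofReal c * ((ENNReal.ofReal a + ENNReal.ofReal b) / 2) := by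
  rw [← ENNReal.ofReal_mul hδ, ← ENNReal.ofReal_add hx (mul_nonneg hδ hd),
    ← ENNReal.ofReal_add ha hb, ← ENNReal.ofReal_ofNat 2, ← ENNReal.ofReal_div_of_pos two_pos,
    ← ENNReal.ofReal_mul hc]
  exact ENNReal.ofReal_le_ofReal h

lemma ENNReal.lt_ofReal_one_sub_mul {A B T : ℝ≥0∞} {δ η ε : ℝ} (hT : T ≠ ⊤) (hδ : 0 < δ)
    (hη : 0 ≤ η) (hηε : 2 * η ≤ ε) (h : A + ENNReal.ofReal δ * B ≤ ENNReal.ofReal (1 + δ * η) * T)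
    (hB : ENNReal.ofReal ε * T < B) : A < ENNReal.ofReal (1 - δ * η) * T := by
  have hR : ENNReal.ofReal (1 + δ * η) * T ≠ ⊤ := ENNReal.mul_ne_top ENNReal.ofReal_ne_top hT
  have hA : A ≠ ⊤ := ne_top_of_le_ne_top hR (le_self_add.trans h)
  have hB' : B ≠ ⊤ := by
    intro hBt
    apply ne_top_of_le_ne_top hR (le_add_self.trans h)
    rw [hBt, ENNReal.mul_top (by simp [hδ])]
  obtain ⟨a, ha, rfl⟩ : ∃ a, 0 ≤ a ∧ A = ENNReal.ofReal a :=
    ⟨A.toReal, ENNReal.toReal_nonneg, (ENNReal.ofReal_toReal hA).symm⟩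
  obtain ⟨b, hb, rfl⟩ : ∃ b, 0 ≤ b ∧ B = ENNReal.ofReal b :=
    ⟨B.toReal, ENNReal.toReal_nonneg, (ENNReal.ofReal_toReal hB').symm⟩
  obtain ⟨t, ht, rfl⟩ : ∃ t, 0 ≤ t ∧ T = ENNReal.ofReal t :=
    ⟨T.toReal, ENNReal.toReal_nonneg, (ENNReal.ofReal_toReal hT).symm⟩
  rw [← ENNReal.ofReal_mul hδ.le, ← ENNReal.ofReal_add ha (by positivity),
    ← ENNReal.ofReal_mul (by positivity), ENNReal.ofReal_le_ofReal_iff (by positivity)] at h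
  rw [← ENNReal.ofReal_mul' ht, ENNReal.ofReal_lt_ofReal_iff'] at hB
  rw [← ENNReal.ofReal_mul' ht, ENNReal.ofReal_lt_ofReal_iff_of_nonneg ha]
  nlinarith [mul_lt_mul_of_pos_left hB.1 hδ, mul_le_mul_of_nonneg_right hηε (mul_nonneg hδ.le ht)]

variable {α : Type*} [MeasurableSpace α]

noncomputable def variableExponentModular {V : Type*} [Norm V] (μ : Measure α) (p : α → ℝ)
    (h : α → V) : ℝ≥0∞ :=
  ∫⁻ x, ENNReal.ofReal (‖h x‖ ^ p x / p x) ∂μ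

lemma variableExponentModular_add_mul_le {V : Type*} [NormedAddCommGroup V] {μ : Measure α}
    {p : α → ℝ} (hp : AEMeasurable p μ) {f g h₁ h₂ : α → V} (hf : AEStronglyMeasurable f μ)
    {δ c : ℝ} (hδ : 0 ≤ δ) (hc : 0 ≤ c)
    (h : ∀ᵐ x ∂μ, 0 < p x ∧ ‖h₁ x‖ ^ p x + δ * ‖h₂ x‖ ^ p x ≤
      c * ((‖f x‖ ^ p x + ‖g x‖ ^ p x) / 2)) :
    variableExponentModular μ p h₁ + ENNReal.ofReal δ * variableExponentModular μ p h₂ ≤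
      ENNReal.ofReal c * ((variableExponentModular μ p f + variableExponentModular μ p g) / 2) := by
  have hfm : AEMeasurable (fun x => ENNReal.ofReal (‖f x‖ ^ p x / p x)) μ :=
    ((hf.norm.aemeasurable.pow hp).div hp).ennreal_ofReal
  unfold variableExponentModular
  rw [← lintegral_const_mul' _ _ ENNReal.ofReal_ne_top, ← lintegral_add_left' hfm,
    ENNReal.div_eq_inv_mul, ← lintegral_const_mul' _ _ (by simp),
    ← lintegral_const_mul' _ _ ENNReal.ofReal_ne_top]
  refine (le_lintegral_add _ _).trans (lintegral_mono_ae (h.mono fun x ⟨hpx, hx⟩ => ?_))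
  rw [← ENNReal.div_eq_inv_mul]
  refine ENNReal.ofReal_add_mul_le_ofReal_mul_half_add (by positivity) (by positivity)
    (by positivity) (by positivity) hδ hc ?_
  calc _ = (‖h₁ x‖ ^ p x + δ * ‖h₂ x‖ ^ p x) / p x := by ring
    _ ≤ c * ((‖f x‖ ^ p x + ‖g x‖ ^ p x) / 2) / p x := div_le_div_of_nonneg_right hx hpx.le
    _ = _ := by ring

theorem variableExponentModular_uniformly_convex {V : Type*} [NormedAddCommGroup V]
    [InnerProductSpace ℝ V] {μ : Measure α} {p : α → ℝ} {q : ℝ} (hq : 1 < q)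
    (hp : AEMeasurable p μ) (hqp : ∀ᵐ x ∂μ, q ≤ p x) {ε : ℝ} (hε : 0 < ε) :
    ∃ δ, 0 < δ ∧ δ < 1 ∧ ∀ f g : α → V, AEStronglyMeasurable f μ →
      variableExponentModular μ p f + variableExponentModular μ p g ≠ ⊤ →
      ENNReal.ofReal ε * ((variableExponentModular μ p f + variableExponentModular μ p g) / 2) <
        variableExponentModular μ p (fun x => (2⁻¹ : ℝ) • (f x - g x)) →
      variableExponentModular μ p (fun x => (2⁻¹ : ℝ) • (f x + g x)) <
        ENNReal.ofReal (1 - δ) *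
          ((variableExponentModular μ p f + variableExponentModular μ p g) / 2) := by
  set η := min ε 1 / 2 with hη_def
  have hη : 0 < η := by positivity
  have hη1 : η < 1 := by linarith [min_le_right ε 1]
  obtain ⟨δ, hδ0, hδ1, hgap⟩ := exists_rpow_norm_half_smul_add_le_of_lt (V := V) hq hη hη1
  refine ⟨δ * η, by positivity, by nlinarith, fun f g hf hfg hdiff => ?_⟩
  have hpoint : ∀ᵐ x ∂μ, 0 < p x ∧ ‖(2⁻¹ : ℝ) • (f x + g x)‖ ^ p x +
      δ * ‖(2⁻¹ : ℝ) • (f x - g x)‖ ^ p x ≤ (1 + δ * η) * ((‖f x‖ ^ p x + ‖g x‖ ^ p x) / 2) :=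
    hqp.mono fun x hx => ⟨by linarith,
      rpow_norm_half_smul_add_add_mul_le (by linarith) hδ0.le hη.le (hgap (p x) hx (f x) (g x))⟩
  exact ENNReal.lt_ofReal_one_sub_mul (ENNReal.div_ne_top hfg two_ne_zero) hδ0 hη.le
    (by linarith [min_le_left ε 1])
    (variableExponentModular_add_mul_le hp hf hδ0.le (by positivity) hpoint) hdiff

lemma dirichletModular_eq_variableExponentModular {n : ℕ} (Ω : Set (EuclideanSpace ℝ (Fin n)))
    (p : EuclideanSpace ℝ (Fin n) → ℝ) (h : EuclideanSpace ℝ (Fin n) → EuclideanSpace ℝ (Fin n)) :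
    dirichletModular Ω p h = variableExponentModular (volume.restrict Ω) p h :=
  rfl

theorem dirichletModular_uniformly_convex_general {n : ℕ}
    (Ω : Set (EuclideanSpace ℝ (Fin n)))
    (p : EuclideanSpace ℝ (Fin n) → ℝ)
    (hp : ContinuousOn p (closure Ω)) (hp1 : 1 < sInf (p '' Ω)) :
    ∀ ε : ℝ, 0 < ε → ∃ δ : ℝ, 0 < δ ∧ δ < 1 ∧
      ∀ f g : EuclideanSpace ℝ (Fin n) → EuclideanSpace ℝ (Fin n),
        Measurable f → Measurable g →
        dirichletModular Ω p f < ⊤ → dirichletModular Ω p g < ⊤ →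
        ENNReal.ofReal ε * (dirichletModular Ω p f + dirichletModular Ω p g) / 2 <
            dirichletModular Ω p (fun x => (2⁻¹ : ℝ) • (f x - g x)) →
        dirichletModular Ω p (fun x => (2⁻¹ : ℝ) • (f x + g x)) <
            ENNReal.ofReal (1 - δ) * (dirichletModular Ω p f + dirichletModular Ω p g) / 2 := by
  intro ε hε
  have hbdd : BddBelow (p '' Ω) := by
    by_contra h
    rw [Real.sInf_of_not_bddBelow h] at hp1
    linarith
  have hqp : ∀ x ∈ closure Ω, sInf (p '' Ω) ≤ p x := fun x hx =>
    ContinuousWithinAt.closure_le hx continuousWithinAt_const ((hp x hx).mono subset_closure)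
      fun y hy => csInf_le hbdd (mem_image_of_mem p hy)
  have hclosure : ∀ᵐ x ∂volume.restrict Ω, x ∈ closure Ω :=
    ae_restrict_of_ae_restrict_of_subset subset_closure
      (ae_restrict_mem isClosed_closure.measurableSet)
  obtain ⟨δ, hδ0, hδ1, hδ⟩ := variableExponentModular_uniformly_convex
    (V := EuclideanSpace ℝ (Fin n)) hp1
    ((hp.aemeasurable isClosed_closure.measurableSet).mono_measure
      (Measure.restrict_mono subset_closure le_rfl))
    (hclosure.mono hqp) hε
  simp only [dirichletModular_eq_variableExponentModular, mul_div_assoc]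
  exact ⟨δ, hδ0, hδ1, fun f g hf _ hfΩ hgΩ =>
    hδ f g hf.aestronglyMeasurable (ENNReal.add_lt_top.2 ⟨hfΩ, hgΩ⟩).ne⟩

/-- Uniform convexity of the modular `ρ_p`: for a domain `Ω` and `p` continuous on `cl(Ω)` with
`inf_Ω p > 1`, for every `ε > 0` there is `0 < δ < 1` such that for all measurable `f, g` with
finite modular, `ρ_p((f-g)/2) > ε (ρ_p(f)+ρ_p(g))/2` implies
`ρ_p((f+g)/2) < (1-δ)(ρ_p(f)+ρ_p(g))/2`. -/
theorem dirichletModular_uniformly_convex {n : ℕ}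
    (Ω : Set (EuclideanSpace ℝ (Fin n)))
    (hΩo : IsOpen Ω) (hΩc : IsConnected Ω)
    (p : EuclideanSpace ℝ (Fin n) → ℝ)
    (hp : ContinuousOn p (closure Ω)) (hp1 : 1 < sInf (p '' Ω)) :
    ∀ ε : ℝ, 0 < ε → ∃ δ : ℝ, 0 < δ ∧ δ < 1 ∧
      ∀ f g : EuclideanSpace ℝ (Fin n) → EuclideanSpace ℝ (Fin n),
        Measurable f → Measurable g →
        dirichletModular Ω p f < ⊤ → dirichletModular Ω p g < ⊤ →
        ENNReal.ofReal ε * (dirichletModular Ω p f + dirichletModular Ω p g) / 2 <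
            dirichletModular Ω p (fun x => (2⁻¹ : ℝ) • (f x - g x)) →
        dirichletModular Ω p (fun x => (2⁻¹ : ℝ) • (f x + g x)) <
            ENNReal.ofReal (1 - δ) * (dirichletModular Ω p f + dirichletModular Ω p g) / 2 :=
  dirichletModular_uniformly_convex_general Ω p hp hp1
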